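/- arXiv:2511.09739 — 3 statements merged into one kernel-verified Lean document; each statement's English description precedes it below -/
import Mathlib

section
/- (Kramers degeneracy) Let E be a complex inner product space, H : E →ₗ[ℂ] E a linear operator, and T : E → E an antiunitary map satisfying T(T x) = −x for all x ∈ E and commuting with H, i.e. T(H x) = H(T x) for all x ∈ E. Then for every real eigenvalue E₀ of H, the eigenspace {x : H x = (E₀ : ℝ) • x} has ℂ-dimension at least 2. Concretely, if H v = (E₀ : ℝ) • v with v ≠ 0, then v and T v are two nonzero, mutually orthogonal eigenvectors of H with eigenvalue E₀, and in particular they are linearly independent over ℂ. -/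
open scoped InnerProductSpace ComplexConjugate

/-- **Kramers degeneracy.** If `T` is antiunitary with `T² = -1` and commutes with
the Hamiltonian `H`, then every real eigenvalue `E₀` of `H` has eigenspace of
ℂ-dimension at least 2; concretely, for any eigenvector `v` with eigenvalue `E₀`,
the vectors `v` and `T v` are nonzero, mutually orthogonal eigenvectors with the
same eigenvalue, and are linearly independent over ℂ. -/
theorem kramers_degeneracy
    {E : Type*} [NormedAddCommGroup E] [InnerProductSpace ℂ E]
    (H : E →ₗ[ℂ] E)
    (T : E → E)
    (hadd : ∀ x y : E, T (x + y) = T x + T y)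
    (hsmul : ∀ (c : ℂ) (x : E), T (c • x) = (conj c) • T x)
    (hnorm : ∀ x : E, ‖T x‖ = ‖x‖)
    (hT2 : ∀ x : E, T (T x) = -x)
    (hcomm : ∀ x : E, T (H x) = H (T x))
    (E₀ : ℝ) (hE₀ : ∃ v : E, v ≠ 0 ∧ H v = (E₀ : ℂ) • v) :
    2 ≤ Module.rank ℂ (LinearMap.ker (H - (E₀ : ℂ) • LinearMap.id)) ∧
    ∀ v : E, v ≠ 0 → H v = (E₀ : ℂ) • v →
      T v ≠ 0 ∧ H (T v) = (E₀ : ℂ) • T v ∧ ⟪T v, v⟫_ℂ = 0 ∧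
      LinearIndependent ℂ ![v, T v] := by
  have hneg : ∀ x : E, T (-x) = -T x := by
    intro x
    have := hsmul (-1) x
    simpa using this
  have hsub : ∀ x y : E, T (x - y) = T x - T y := by
    intro x y
    rw [sub_eq_add_neg, hadd, hneg, sub_eq_add_neg]
  -- antiunitary maps reverse inner products
  have hinner : ∀ x y : E, ⟪T x, T y⟫_ℂ = ⟪y, x⟫_ℂ := by
    intro x y
    have hI : T (Complex.I • y) = -(Complex.I • T y) := by
      rw [hsmul]; simp [Complex.conj_I]
    have h1 : ‖T x + T y‖ = ‖x + y‖ := by rw [← hadd, hnorm]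
    have h2 : ‖T x - T y‖ = ‖x - y‖ := by rw [← hsub, hnorm]
    have h3 : ‖T x - Complex.I • T y‖ = ‖x + Complex.I • y‖ := by
      have : T x - Complex.I • T y = T (x + Complex.I • y) := by
        rw [hadd, hI]; abel
      rw [this, hnorm]
    have h4 : ‖T x + Complex.I • T y‖ = ‖x - Complex.I • y‖ := by
      have : T x + Complex.I • T y = T (x - Complex.I • y) := by
        rw [hsub, hI]; abel
      rw [this, hnorm]
    have h5 : ‖y - Complex.I • x‖ = ‖x + Complex.I • y‖ := by
      have he : Complex.I • (y - Complex.I • x) = x + Complex.I • y := by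
        rw [smul_sub, smul_smul, Complex.I_mul_I, neg_one_smul]
        abel
      calc ‖y - Complex.I • x‖ = ‖Complex.I • (y - Complex.I • x)‖ := by
            rw [norm_smul]; simp
        _ = ‖x + Complex.I • y‖ := by rw [he]
    have h6 : ‖y + Complex.I • x‖ = ‖x - Complex.I • y‖ := by
      have he : Complex.I • (y + Complex.I • x) = -(x - Complex.I • y) := by
        rw [smul_add, smul_smul, Complex.I_mul_I, neg_one_smul]
        abel
      calc ‖y + Complex.I • x‖ = ‖Complex.I • (y + Complex.I • x)‖ := by
            rw [norm_smul]; simp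
        _ = ‖x - Complex.I • y‖ := by rw [he, norm_neg]
    rw [inner_eq_sum_norm_sq_div_four, inner_eq_sum_norm_sq_div_four]
    have hIK : (RCLike.I : ℂ) = Complex.I := rfl
    rw [hIK, h1, h2, h3, h4, h5, h6, add_comm y x, norm_sub_rev y x]
  -- eigenvector property of `T v`
  have heig : ∀ v : E, H v = (E₀ : ℂ) • v → H (T v) = (E₀ : ℂ) • T v := by
    intro v hv
    have := hcomm v
    rw [hv, hsmul] at this
    rw [← this]
    simp [Complex.conj_ofReal]
  -- orthogonality
  have horth : ∀ v : E, ⟪T v, v⟫_ℂ = 0 := by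
    intro v
    have h := hinner v (T v)
    rw [hT2, inner_neg_right] at h
    linear_combination -h / 2
  -- nonvanishing
  have hTne : ∀ v : E, v ≠ 0 → T v ≠ 0 := by
    intro v hv h0
    apply hv
    have := hnorm v
    rw [h0, norm_zero] at this
    exact (norm_eq_zero.mp this.symm)
  -- linear independence of the pair
  have hli : ∀ v : E, v ≠ 0 → LinearIndependent ℂ ![v, T v] := by
    intro v hv
    refine LinearIndependent.pair_iff.mpr fun s t hst => ?_
    have hvo : ⟪v, T v⟫_ℂ = 0 := by
      rw [← inner_conj_symm, horth v, map_zero]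
    have hs : s = 0 := by
      have h := congrArg (fun z => ⟪v, z⟫_ℂ) hst
      simp only [inner_add_right, inner_smul_right, hvo, inner_zero_right, mul_zero,
        add_zero] at h
      rcases mul_eq_zero.mp h with h | h
      · exact h
      · exact absurd (inner_self_eq_zero.mp h) hv
    subst hs
    rw [zero_smul, zero_add] at hst
    rcases smul_eq_zero.mp hst with h | h
    · exact ⟨rfl, h⟩
    · exact absurd h (hTne v hv)
  refine ⟨?_, fun v hv hHv => ⟨hTne v hv, heig v hHv, horth v, hli v hv⟩⟩
  -- rank bound
  obtain ⟨v, hv, hHv⟩ := hE₀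
  set K := LinearMap.ker (H - (E₀ : ℂ) • LinearMap.id) with hK
  have hmem : ∀ w : E, H w = (E₀ : ℂ) • w → w ∈ K := by
    intro w hw
    simp [hK, LinearMap.mem_ker, LinearMap.sub_apply, hw]
  have u0 : K := ⟨v, hmem v hHv⟩
  let u : Fin 2 → K := ![⟨v, hmem v hHv⟩, ⟨T v, hmem (T v) (heig v hHv)⟩]
  have hcomp : (K.subtype) ∘ u = ![v, T v] := by
    funext i
    fin_cases i <;> rfl
  have hliK : LinearIndependent ℂ u := by
    apply LinearIndependent.of_comp K.subtype
    rw [hcomp]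
    exact hli v hv
  have := hliK.cardinal_lift_le_rank
  simpa using this
end

section
/- (For N = 2 generations the CKM matrix has no physical phase) For every unitary 2×2 complex matrix V (V ∈ Matrix.unitaryGroup (Fin 2) ℂ), there exist real numbers θ, α₁, α₂, β₁, β₂ such that V = D₁ * R(θ) * D₂, where D₁ = diagonal(exp(i α₁), exp(i α₂)), D₂ = diagonal(exp(i β₁), exp(i β₂)) are diagonal phase matrices, and R(θ) is the complexification of the real rotation matrix with entries R₀₀ = cos θ, R₀₁ = sin θ, R₁₀ = −sin θ, R₁₁ = cos θ. In other words, every 2×2 unitary matrix becomes a real orthogonal rotation after rephasing its rows and columns. -/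
open Matrix Complex

/-- **For `N = 2` generations the CKM matrix has no physical phase:** every `2 × 2`
unitary matrix becomes a real orthogonal rotation after rephasing its rows and
columns, i.e. it factors as `D₁ * R(θ) * D₂` with `D₁, D₂` diagonal phase matrices
and `R(θ)` a real rotation matrix. -/
theorem unitary_two_eq_phases_mul_rotation_mul_phases
    (V : Matrix.unitaryGroup (Fin 2) ℂ) :
    ∃ θ α₁ α₂ β₁ β₂ : ℝ,
      (V : Matrix (Fin 2) (Fin 2) ℂ) =
        diagonal ![Complex.exp (Complex.I * α₁), Complex.exp (Complex.I * α₂)] *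
        Matrix.of ![![((Real.cos θ : ℝ) : ℂ), ((Real.sin θ : ℝ) : ℂ)],
                    ![-((Real.sin θ : ℝ) : ℂ), ((Real.cos θ : ℝ) : ℂ)]] *
        diagonal ![Complex.exp (Complex.I * β₁), Complex.exp (Complex.I * β₂)] := by
  set A := (V : Matrix (Fin 2) (Fin 2) ℂ) with hA
  have hrow : A * Aᴴ = 1 := by
    have := V.2; rw [Matrix.mem_unitaryGroup_iff] at this; exact this
  have hcol : Aᴴ * A = 1 := by
    have := V.2; rw [Matrix.mem_unitaryGroup_iff'] at this; exact this
  set a := A 0 0 with ha'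
  set b := A 0 1 with hb'
  set c := A 1 0 with hc'
  set d := A 1 1 with hd'
  have h01 : a * (starRingEnd ℂ) c + b * (starRingEnd ℂ) d = 0 := by
    have := congrFun (congrFun hrow 0) 1
    simpa [Matrix.mul_apply, Fin.sum_univ_two, Matrix.one_apply,
      Matrix.conjTranspose_apply] using this
  have hn1 : normSq a + normSq b = 1 := by
    have := congrFun (congrFun hrow 0) 0
    simp [Matrix.mul_apply, Fin.sum_univ_two, Matrix.one_apply, Matrix.conjTranspose_apply,
      Complex.mul_conj] at this
    exact_mod_cast this
  have hn2 : normSq c + normSq d = 1 := by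
    have := congrFun (congrFun hrow 1) 1
    simp [Matrix.mul_apply, Fin.sum_univ_two, Matrix.one_apply, Matrix.conjTranspose_apply,
      Complex.mul_conj] at this
    exact_mod_cast this
  have hm1 : normSq a + normSq c = 1 := by
    have := congrFun (congrFun hcol 0) 0
    simp [Matrix.mul_apply, Fin.sum_univ_two, Matrix.one_apply, Matrix.conjTranspose_apply,
      Complex.mul_conj, mul_comm] at this
    exact_mod_cast this
  -- |b| = |c|, |d| = |a|
  have habs_bc : ‖b‖ = ‖c‖ := by
    have h : normSq b = normSq c := by linarith
    rw [Complex.norm_def, Complex.norm_def, h]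
  have habs_da : ‖d‖ = ‖a‖ := by
    have h : normSq d = normSq a := by
      have := habs_bc
      rw [Complex.norm_def, Complex.norm_def] at this
      have h2 : normSq b = normSq c := by
        have := congrArg (fun x => x^2) this
        simpa [Real.sq_sqrt, Complex.normSq_nonneg] using this
      linarith
    rw [Complex.norm_def, Complex.norm_def, h]
  have hpolar : ∀ z : ℂ, (‖z‖ : ℂ) * Complex.exp (Complex.I * z.arg) = z := by
    intro z
    rw [mul_comm Complex.I]
    exact Complex.norm_mul_exp_arg_mul_I z
  have habs_a_le : ‖a‖ ≤ 1 := by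
    have : normSq a ≤ 1 := by have := Complex.normSq_nonneg b; linarith
    rw [Complex.norm_def]
    calc Real.sqrt (normSq a) ≤ Real.sqrt 1 := Real.sqrt_le_sqrt this
    _ = 1 := Real.sqrt_one
  set θ := Real.arccos (‖a‖) with hθ
  have hcosθ : Real.cos θ = ‖a‖ :=
    Real.cos_arccos (by linarith [norm_nonneg a]) habs_a_le
  have hsinθ : Real.sin θ = ‖b‖ := by
    rw [hθ, Real.sin_arccos]
    have : 1 - (‖a‖)^2 = (‖b‖)^2 := by
      rw [Complex.sq_norm, Complex.sq_norm]; linarith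
    rw [this, Real.sqrt_sq (norm_nonneg b)]
  refine ⟨θ, 0, if c = 0 then Complex.arg d else Complex.arg (-c) - Complex.arg a,
    Complex.arg a, Complex.arg b, ?_⟩
  ext i j
  fin_cases i <;> fin_cases j <;>
    simp [Matrix.mul_apply, Fin.sum_univ_two, Matrix.diagonal, hcosθ, hsinθ]
  · exact (hpolar a).symm
  · exact (hpolar b).symm
  · show c = _
    by_cases hc : c = 0
    · have h0 : ‖b‖ = 0 := by rw [habs_bc, hc]; simp
      rw [hc, h0]; simp
    · rw [if_neg hc]
      have hbne : ‖b‖ = ‖(-c)‖ := by rw [habs_bc]; simp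
      push_cast
      rw [mul_sub, Complex.exp_sub, hbne]
      have key : ∀ (e₁ e₂ m : ℂ), e₁ ≠ 0 → e₂ / e₁ * m * e₁ = m * e₂ := by
        intros e₁ e₂ m h
        field_simp
      rw [key _ _ _ (Complex.exp_ne_zero _)]
      rw [hpolar (-c), neg_neg]
  · show d = _
    by_cases hc : c = 0
    · have hb0 : b = 0 := by
        have h0 : ‖b‖ = 0 := by rw [habs_bc, hc]; simp
        simpa using h0
      rw [if_pos hc, hb0, ← habs_da]
      simp only [Complex.arg_zero]
      push_cast
      rw [mul_zero, Complex.exp_zero, mul_one, mul_comm]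
      exact (hpolar d).symm
    · rw [if_neg hc]
      by_cases ha0 : a = 0
      · have hd0 : d = 0 := by
          have h0 : ‖d‖ = 0 := by rw [habs_da, ha0]; simp
          simpa using h0
        rw [hd0, ha0]; simp
      · have hb0 : b ≠ 0 := by
          intro h
          apply hc
          have h0 : ‖c‖ = 0 := by rw [← habs_bc, h]; simp
          simpa using h0
        have hconj : (starRingEnd ℂ) a * c + (starRingEnd ℂ) b * d = 0 := by
          have h2 := congrArg (starRingEnd ℂ) h01
          simpa using h2
        have hepolar : ∀ z : ℂ, z ≠ 0 → Complex.exp (Complex.I * z.arg) = z / (‖z‖) := by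
          intro z hz
          rw [eq_div_iff (by simpa using hz), mul_comm]
          exact hpolar z
        have hca : (‖c‖ : ℝ) ≠ 0 := by simpa using hc
        have hba : (‖b‖ : ℝ) ≠ 0 := by simpa using hb0
        have haa : (‖a‖ : ℝ) ≠ 0 := by simpa using ha0
        have hbb : ((‖b‖ : ℂ))^2 = b * (starRingEnd ℂ) b := by
          rw [Complex.mul_conj]
          norm_cast
          exact Complex.sq_norm b
        have haa2 : ((‖a‖ : ℂ))^2 = a * (starRingEnd ℂ) a := by
          rw [Complex.mul_conj]
          norm_cast
          exact Complex.sq_norm a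
        have hcb : (‖c‖ : ℂ) = (‖b‖ : ℂ) := by
          norm_cast; rw [habs_bc]
        push_cast
        rw [mul_sub, Complex.exp_sub, hepolar _ (neg_ne_zero.mpr hc), hepolar _ ha0,
          hepolar _ hb0]
        rw [norm_neg]
        have hca2 : (‖c‖ : ℂ) ≠ 0 := by exact_mod_cast hca
        have hba2 : (‖b‖ : ℂ) ≠ 0 := by exact_mod_cast hba
        have haa3 : (‖a‖ : ℂ) ≠ 0 := by exact_mod_cast haa
        rw [hcb]
        field_simp
        linear_combination (d*a)*hbb + (c*b)*haa2 + (a*b)*hconj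
end

section
/- (Standard parameterization of a 3×3 unitary matrix: three angles and one phase) For every unitary 3×3 complex matrix V (V ∈ Matrix.unitaryGroup (Fin 3) ℂ), there exist real numbers θ₁₂, θ₁₃, θ₂₃, δ, α₁, α₂, α₃, β₂, β₃ such that V = Dα * R₂₃ * U₁₃ * R₁₂ * Dβ, where Dα = diagonal(exp(i α₁), exp(i α₂), exp(i α₃)), Dβ = diagonal(1, exp(i β₂), exp(i β₃)), R₂₃ is the matrix with rows (1,0,0), (0, cos θ₂₃, sin θ₂₃), (0, −sin θ₂₃, cos θ₂₃), U₁₃ is the matrix with rows (cos θ₁₃, 0, sin θ₁₃ · exp(−i δ)), (0, 1, 0), (−sin θ₁₃ · exp(i δ), 0, cos θ₁₃), and R₁₂ is the matrix with rows (cos θ₁₂, sin θ₁₂, 0), (−sin θ₁₂, cos θ₁₂, 0), (0, 0, 1). In other words, after removing five rephasing parameters, every 3×3 unitary matrix is described by exactly three mixing angles and one complex phase. -/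
open Matrix Complex

noncomputable section


private theorem conj_exp_I (x : ℝ) :
    (starRingEnd ℂ) (Complex.exp (Complex.I * x)) = Complex.exp (-(Complex.I * x)) := by
  rw [← Complex.exp_conj]; congr 1; simp

private theorem conj_exp_negI (x : ℝ) :
    (starRingEnd ℂ) (Complex.exp (-(Complex.I * x))) = Complex.exp (Complex.I * x) := by
  rw [← Complex.exp_conj]; congr 1; simp

private theorem exp_I_ne (x : ℝ) : Complex.exp (Complex.I * x) ≠ 0 := Complex.exp_ne_zero _

private theorem exp_mul_exp_neg (x : ℝ) :
    Complex.exp (Complex.I * x) * Complex.exp (-(Complex.I * x)) = 1 := by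
  rw [← Complex.exp_add]; simp

private theorem rep (z : ℂ) :
    ((‖z‖ : ℝ) : ℂ) * Complex.exp (Complex.I * Complex.arg z) = z := by
  rw [mul_comm Complex.I]; exact Complex.norm_mul_exp_arg_mul_I z

private theorem normSq_sum_zero {z w : ℂ} (h : Complex.normSq z + Complex.normSq w = 0) :
    z = 0 ∧ w = 0 := by
  have h1 := Complex.normSq_nonneg z
  have h2 := Complex.normSq_nonneg w
  constructor <;> rw [← Complex.normSq_eq_zero] <;> linarith

private theorem abs_one_of_normSq_one {z : ℂ} (h : Complex.normSq z = 1) :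
    ‖z‖ = 1 := by
  have := Complex.normSq_eq_norm_sq z
  nlinarith [norm_nonneg z]

private theorem L1 (q r s t : ℂ)
    (h1 : Complex.normSq q + Complex.normSq r = 1)
    (h2 : Complex.normSq q + Complex.normSq s = 1)
    (h3 : Complex.normSq r + Complex.normSq t = 1)
    (h4 : q * (starRingEnd ℂ) r + s * (starRingEnd ℂ) t = 0) :
    ∃ φ a2 a3 b2 : ℝ,
      q = (Real.cos φ : ℂ) * Complex.exp (Complex.I * a2) ∧
      r = (Real.sin φ : ℂ) * Complex.exp (Complex.I * (a2 + b2)) ∧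
      s = -(Real.sin φ : ℂ) * Complex.exp (Complex.I * a3) ∧
      t = (Real.cos φ : ℂ) * Complex.exp (Complex.I * (a3 + b2)) := by
  have hsr : Complex.normSq s = Complex.normSq r := by linarith
  have htq : Complex.normSq t = Complex.normSq q := by linarith
  have habs_sr : ‖s‖ = ‖r‖ := by
    rw [Complex.norm_def, Complex.norm_def, hsr]
  by_cases hr : r = 0
  · have hs : s = 0 := by rw [← Complex.normSq_eq_zero, hsr, hr]; simp
    have hq1 : ‖q‖ = 1 := abs_one_of_normSq_one (by simp [hr] at h1; exact h1)
    have ht1 : ‖t‖ = 1 := abs_one_of_normSq_one (by simp [hr] at h3; exact h3)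
    refine ⟨0, Complex.arg q, 0, Complex.arg t, ?_, ?_, ?_, ?_⟩
    · have h5 : q = ((1:ℝ):ℂ) * Complex.exp (Complex.I * Complex.arg q) := by
        rw [← hq1]; exact (rep q).symm
      simpa [Real.cos_zero] using h5
    · simp [hr]
    · simp [hs]
    · have h5 : t = ((1:ℝ):ℂ) * Complex.exp (Complex.I * Complex.arg t) := by
        rw [← ht1]; exact (rep t).symm
      simpa [Real.cos_zero] using h5
  · by_cases hq : q = 0
    · have ht : t = 0 := by rw [← Complex.normSq_eq_zero, htq, hq]; simp
      have hr1 : ‖r‖ = 1 := abs_one_of_normSq_one (by simp [hq] at h1; exact h1)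
      have hs1 : ‖s‖ = 1 := by rw [habs_sr, hr1]
      refine ⟨Real.pi/2, 0, Complex.arg (-s), Complex.arg r, ?_, ?_, ?_, ?_⟩
      · simp [hq]
      · have h5 : r = ((1:ℝ):ℂ) * Complex.exp (Complex.I * ((0:ℝ) + Complex.arg r)) := by
          rw [← hr1]; push_cast; rw [zero_add]; exact (rep r).symm
        simpa [Real.sin_pi_div_two] using h5
      · conv_lhs => rw [show s = -(-s) by ring, ← rep (-s)]
        rw [norm_neg, hs1, Real.sin_pi_div_two]; push_cast; ring
      · simp [ht]
    · -- main case
      have hrabs : 0 < ‖r‖ := norm_pos_iff.mpr hr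
      have hqabs : 0 < ‖q‖ := norm_pos_iff.mpr hq
      set φ := Real.arcsin (‖r‖) with hφ
      have hr1 : ‖r‖ ≤ 1 := by
        nlinarith [Complex.normSq_eq_norm_sq r, Complex.normSq_nonneg q, norm_nonneg r]
      have hsinφ : Real.sin φ = ‖r‖ := Real.sin_arcsin (by linarith) hr1
      have hcosφ : Real.cos φ = ‖q‖ := by
        rw [hφ, Real.cos_arcsin]
        have h5 : 1 - ‖r‖ ^ 2 = ‖q‖ ^ 2 := by
          nlinarith [Complex.normSq_eq_norm_sq r, Complex.normSq_eq_norm_sq q]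
        rw [h5, Real.sqrt_sq (norm_nonneg q)]
      set aq := Complex.arg q with haq
      set ar := Complex.arg r with har
      set a3 := Complex.arg (-s) with ha3
      have hqQ : q = (Real.cos φ : ℂ) * Complex.exp (Complex.I * aq) := by
        rw [haq, hcosφ, rep]
      have hsS : s = -(Real.sin φ : ℂ) * Complex.exp (Complex.I * a3) := by
        conv_lhs => rw [show s = -(-s) by ring, ← rep (-s)]
        rw [norm_neg, habs_sr, ← hsinφ, ha3]; ring
      have hrR : r = (Real.sin φ : ℂ) * Complex.exp (Complex.I * ar) := by
        rw [har, hsinφ, rep]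
      refine ⟨φ, aq, a3, ar - aq, hqQ, ?_, hsS, ?_⟩
      · rw [show Complex.I * ((aq : ℝ) + ((ar - aq : ℝ) : ℂ)) =
          Complex.I * (ar : ℝ) by push_cast; ring]
        exact hrR
      · -- t case
        have hsne : s ≠ 0 := by
          intro h0; rw [h0] at hsr; simp at hsr; exact hr (Complex.normSq_eq_zero.mp hsr.symm)
        have hsinne : ((Real.sin φ : ℝ) : ℂ) ≠ 0 := by
          rw [Complex.ofReal_ne_zero, hsinφ]; exact ne_of_gt hrabs
        have hct : (starRingEnd ℂ) t =
            (Real.cos φ : ℂ) * Complex.exp (-(Complex.I *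
              ((a3 : ℝ) + ((ar - aq : ℝ) : ℂ)))) := by
          have h7 : (starRingEnd ℂ) r =
              (Real.sin φ : ℂ) * Complex.exp (-(Complex.I * ar)) := by
            conv_lhs => rw [hrR]
            rw [_root_.map_mul, Complex.conj_ofReal, conj_exp_I]
          have h6 : s * (starRingEnd ℂ) t = -(q * (starRingEnd ℂ) r) := by
            linear_combination h4
          apply mul_left_cancel₀ hsne
          rw [h6, hqQ, h7, hsS]
          push_cast
          simp only [Complex.exp_add, Complex.exp_sub, Complex.exp_neg, mul_add, add_mul]
          field_simp [Complex.exp_ne_zero]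
          rw [show Complex.I * ((ar:ℂ) - (aq:ℂ)) =
              (Complex.I * (ar:ℂ)) - (Complex.I * (aq:ℂ)) by ring, Complex.exp_sub]
          field_simp [Complex.exp_ne_zero]
        have ht2 : t = (starRingEnd ℂ) ((starRingEnd ℂ) t) := (Complex.conj_conj t).symm
        rw [ht2, hct, _root_.map_mul, Complex.conj_ofReal, ← Complex.exp_conj]
        push_cast
        congr 1
        simp [Complex.conj_ofReal]
        try ring

private def Dl (x y z : ℝ) : Matrix (Fin 3) (Fin 3) ℂ :=
  diagonal ![Complex.exp (Complex.I * x), Complex.exp (Complex.I * y), Complex.exp (Complex.I * z)]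

private def Dr (y z : ℝ) : Matrix (Fin 3) (Fin 3) ℂ :=
  diagonal ![(1 : ℂ), Complex.exp (Complex.I * y), Complex.exp (Complex.I * z)]

private def R23 (b : ℝ) : Matrix (Fin 3) (Fin 3) ℂ :=
  Matrix.of ![![(1 : ℂ), 0, 0],
              ![0, ((Real.cos b : ℝ) : ℂ), ((Real.sin b : ℝ) : ℂ)],
              ![0, -((Real.sin b : ℝ) : ℂ), ((Real.cos b : ℝ) : ℂ)]]

private def U13 (a δ : ℝ) : Matrix (Fin 3) (Fin 3) ℂ :=
  Matrix.of ![![((Real.cos a : ℝ) : ℂ), 0,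
                ((Real.sin a : ℝ) : ℂ) * Complex.exp (-(Complex.I * δ))],
              ![0, (1 : ℂ), 0],
              ![-((Real.sin a : ℝ) : ℂ) * Complex.exp (Complex.I * δ), 0,
                ((Real.cos a : ℝ) : ℂ)]]

private def R12 (t : ℝ) : Matrix (Fin 3) (Fin 3) ℂ :=
  Matrix.of ![![((Real.cos t : ℝ) : ℂ), ((Real.sin t : ℝ) : ℂ), 0],
              ![-((Real.sin t : ℝ) : ℂ), ((Real.cos t : ℝ) : ℂ), 0],
              ![0, 0, (1 : ℂ)]]

private theorem R23_mem (b : ℝ) : R23 b ∈ Matrix.unitaryGroup (Fin 3) ℂ := by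
  rw [Matrix.mem_unitaryGroup_iff]
  ext i j
  fin_cases i <;> fin_cases j <;>
    simp [R23, Matrix.mul_apply, Fin.sum_univ_three, Matrix.conjTranspose_apply, Matrix.one_apply,
      ← Complex.ofReal_cos, ← Complex.ofReal_sin, Complex.conj_ofReal] <;> norm_cast <;>
    ring_nf <;>
    simp [Real.sin_sq_add_cos_sq, Real.cos_sq_add_sin_sq]

private theorem R12_mem (t : ℝ) : R12 t ∈ Matrix.unitaryGroup (Fin 3) ℂ := by
  rw [Matrix.mem_unitaryGroup_iff]
  ext i j
  fin_cases i <;> fin_cases j <;>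
    simp [R12, Matrix.mul_apply, Fin.sum_univ_three, Matrix.conjTranspose_apply, Matrix.one_apply,
      ← Complex.ofReal_cos, ← Complex.ofReal_sin, Complex.conj_ofReal] <;> norm_cast <;>
    ring_nf <;>
    simp [Real.sin_sq_add_cos_sq, Real.cos_sq_add_sin_sq]

private theorem conj_cos_real (x : ℝ) :
    (starRingEnd ℂ) (Complex.cos x) = Complex.cos x := by
  rw [← Complex.ofReal_cos]; exact Complex.conj_ofReal _

private theorem conj_sin_real (x : ℝ) :
    (starRingEnd ℂ) (Complex.sin x) = Complex.sin x := by
  rw [← Complex.ofReal_sin]; exact Complex.conj_ofReal _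

private theorem U13_mem (a δ : ℝ) : U13 a δ ∈ Matrix.unitaryGroup (Fin 3) ℂ := by
  rw [Matrix.mem_unitaryGroup_iff]
  ext i j
  fin_cases i <;> fin_cases j <;>
    simp [U13, Matrix.mul_apply, Fin.sum_univ_three, Matrix.conjTranspose_apply,
      Matrix.one_apply, Complex.conj_ofReal, conj_exp_I, conj_exp_negI,
      conj_cos_real, conj_sin_real] <;>
    ring_nf <;>
    simp [mul_assoc, ← Complex.exp_add, Complex.sin_sq_add_cos_sq, Complex.cos_sq_add_sin_sq]

private theorem Dl_mem (x y z : ℝ) : Dl x y z ∈ Matrix.unitaryGroup (Fin 3) ℂ := by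
  rw [Matrix.mem_unitaryGroup_iff]
  ext i j
  fin_cases i <;> fin_cases j <;>
    simp [Dl, Matrix.mul_apply, Fin.sum_univ_three, Matrix.conjTranspose_apply, Matrix.diagonal,
      Matrix.one_apply, ← Complex.exp_conj, Complex.conj_ofReal, ← Complex.exp_add] <;>
    ring_nf <;> simp

private theorem Dr_mem (y z : ℝ) : Dr y z ∈ Matrix.unitaryGroup (Fin 3) ℂ := by
  rw [Matrix.mem_unitaryGroup_iff]
  ext i j
  fin_cases i <;> fin_cases j <;>
    simp [Dr, Matrix.mul_apply, Fin.sum_univ_three, Matrix.conjTranspose_apply, Matrix.diagonal,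
      Matrix.one_apply, ← Complex.exp_conj, Complex.conj_ofReal, ← Complex.exp_add] <;>
    ring_nf <;> simp

set_option maxHeartbeats 1000000 in
private theorem prodA (a b t δ α₁ α₂ α₃ β₂ β₃ : ℝ) :
    Dl α₁ α₂ α₃ * R23 b * U13 a δ * R12 t * Dr β₂ β₃ =
    Matrix.of
      ![![Complex.exp (Complex.I * α₁) * (((Real.cos t : ℝ) : ℂ) * ((Real.cos a : ℝ) : ℂ)),
          Complex.exp (Complex.I * α₁) * Complex.exp (Complex.I * β₂) *
            (((Real.sin t : ℝ) : ℂ) * ((Real.cos a : ℝ) : ℂ)),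
          Complex.exp (Complex.I * α₁) * Complex.exp (Complex.I * β₃) *
            (((Real.sin a : ℝ) : ℂ) * Complex.exp (-(Complex.I * δ)))],
        ![Complex.exp (Complex.I * α₂) *
            (-((Real.sin t : ℝ) : ℂ) * ((Real.cos b : ℝ) : ℂ) -
              ((Real.cos t : ℝ) : ℂ) * ((Real.sin b : ℝ) : ℂ) * ((Real.sin a : ℝ) : ℂ) *
                Complex.exp (Complex.I * δ)),
          Complex.exp (Complex.I * α₂) * Complex.exp (Complex.I * β₂) *
            (((Real.cos t : ℝ) : ℂ) * ((Real.cos b : ℝ) : ℂ) -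
              ((Real.sin t : ℝ) : ℂ) * ((Real.sin b : ℝ) : ℂ) * ((Real.sin a : ℝ) : ℂ) *
                Complex.exp (Complex.I * δ)),
          Complex.exp (Complex.I * α₂) * Complex.exp (Complex.I * β₃) *
            (((Real.sin b : ℝ) : ℂ) * ((Real.cos a : ℝ) : ℂ))],
        ![Complex.exp (Complex.I * α₃) *
            (((Real.sin t : ℝ) : ℂ) * ((Real.sin b : ℝ) : ℂ) -
              ((Real.cos t : ℝ) : ℂ) * ((Real.cos b : ℝ) : ℂ) * ((Real.sin a : ℝ) : ℂ) *
                Complex.exp (Complex.I * δ)),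
          Complex.exp (Complex.I * α₃) * Complex.exp (Complex.I * β₂) *
            (-((Real.cos t : ℝ) : ℂ) * ((Real.sin b : ℝ) : ℂ) -
              ((Real.sin t : ℝ) : ℂ) * ((Real.cos b : ℝ) : ℂ) * ((Real.sin a : ℝ) : ℂ) *
                Complex.exp (Complex.I * δ)),
          Complex.exp (Complex.I * α₃) * Complex.exp (Complex.I * β₃) *
            (((Real.cos b : ℝ) : ℂ) * ((Real.cos a : ℝ) : ℂ))]] := by
  ext i j
  fin_cases i <;> fin_cases j <;>
    simp [Dl, Dr, R23, U13, R12, Matrix.mul_apply, Fin.sum_univ_three, Matrix.diagonal] <;>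
    ring

set_option maxHeartbeats 1000000 in
private theorem prodB (a b t γ α₁ α₂ α₃ β₂ β₃ : ℝ) :
    Dl α₁ α₂ α₃ * R23 b * U13 a 0 * diagonal ![(1:ℂ), Complex.exp (Complex.I * γ), 1] *
      R12 t * Dr β₂ β₃ =
    Dl α₁ (α₂+γ) (α₃+γ) * R23 b * U13 a (-γ) * R12 t * Dr β₂ (β₃-γ) := by
  ext i j
  fin_cases i <;> fin_cases j <;>
    simp [Dl, Dr, R23, U13, R12, Matrix.mul_apply, Fin.sum_univ_three, Matrix.diagonal,
      Complex.exp_add, Complex.ofReal_add, Complex.ofReal_sub, Complex.ofReal_neg,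
      mul_add, add_mul]
  all_goals try simp [mul_assoc, ← Complex.exp_add]
  all_goals ring_nf
  all_goals simp [mul_assoc, mul_comm, mul_left_comm, ← Complex.exp_add]
  all_goals ring_nf
  all_goals tauto

set_option maxHeartbeats 1000000 in
private theorem Mp_eq (a b α₁ α₂ α₃ : ℝ) :
    Dl α₁ α₂ α₃ * R23 b * U13 a 0 =
    Matrix.of
      ![![Complex.exp (Complex.I * α₁) * ((Real.cos a : ℝ) : ℂ), 0,
          Complex.exp (Complex.I * α₁) * ((Real.sin a : ℝ) : ℂ)],
        ![Complex.exp (Complex.I * α₂) * (-((Real.sin b : ℝ) : ℂ) * ((Real.sin a : ℝ) : ℂ)),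
          Complex.exp (Complex.I * α₂) * ((Real.cos b : ℝ) : ℂ),
          Complex.exp (Complex.I * α₂) * (((Real.sin b : ℝ) : ℂ) * ((Real.cos a : ℝ) : ℂ))],
        ![Complex.exp (Complex.I * α₃) * (-((Real.cos b : ℝ) : ℂ) * ((Real.sin a : ℝ) : ℂ)),
          Complex.exp (Complex.I * α₃) * (-((Real.sin b : ℝ) : ℂ)),
          Complex.exp (Complex.I * α₃) * (((Real.cos b : ℝ) : ℂ) * ((Real.cos a : ℝ) : ℂ))]] := by
  ext i j
  fin_cases i <;> fin_cases j <;>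
    simp [Dl, R23, U13, Matrix.mul_apply, Fin.sum_univ_three, Matrix.diagonal] <;>
    ring

private theorem W2_row2 (t β₂ β₃ : ℝ) :
    (R12 t * Dr β₂ β₃) 2 0 = 0 ∧ (R12 t * Dr β₂ β₃) 2 1 = 0 ∧
      (R12 t * Dr β₂ β₃) 2 2 = Complex.exp (Complex.I * β₃) := by
  refine ⟨?_, ?_, ?_⟩ <;>
    simp [R12, Dr, Matrix.mul_apply, Fin.sum_univ_three, Matrix.diagonal]


private theorem W2_eq (t β₂ β₃ : ℝ) :
    R12 t * Dr β₂ β₃ =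
    Matrix.of
      ![![((Real.cos t : ℝ) : ℂ), ((Real.sin t : ℝ) : ℂ) * Complex.exp (Complex.I * β₂), 0],
        ![-((Real.sin t : ℝ) : ℂ), ((Real.cos t : ℝ) : ℂ) * Complex.exp (Complex.I * β₂), 0],
        ![0, 0, Complex.exp (Complex.I * β₃)]] := by
  ext i j
  fin_cases i <;> fin_cases j <;>
    simp [R12, Dr, Matrix.mul_apply, Fin.sum_univ_three, Matrix.diagonal]


set_option maxHeartbeats 1000000 in
/-- **Standard parameterization of a `3 × 3` unitary matrix: three angles and one
phase.** Every `3 × 3` unitary matrix `V` can be written as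
`V = Dα * R₂₃ * U₁₃ * R₁₂ * Dβ`, where `Dα` and `Dβ` are diagonal rephasing
matrices (five rephasing parameters) and the remaining factors are described by
the three mixing angles `θ₁₂, θ₁₃, θ₂₃` and the single complex phase `δ`. -/
theorem unitary_three_standard_parameterization
    (V : Matrix.unitaryGroup (Fin 3) ℂ) :
    ∃ θ₁₂ θ₁₃ θ₂₃ δ α₁ α₂ α₃ β₂ β₃ : ℝ,
      (V : Matrix (Fin 3) (Fin 3) ℂ) =
        diagonal ![Complex.exp (Complex.I * α₁), Complex.exp (Complex.I * α₂),
                   Complex.exp (Complex.I * α₃)] *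
        Matrix.of ![![(1 : ℂ), 0, 0],
                    ![0, ((Real.cos θ₂₃ : ℝ) : ℂ), ((Real.sin θ₂₃ : ℝ) : ℂ)],
                    ![0, -((Real.sin θ₂₃ : ℝ) : ℂ), ((Real.cos θ₂₃ : ℝ) : ℂ)]] *
        Matrix.of ![![((Real.cos θ₁₃ : ℝ) : ℂ), 0,
                      ((Real.sin θ₁₃ : ℝ) : ℂ) * Complex.exp (-(Complex.I * δ))],
                    ![0, (1 : ℂ), 0],
                    ![-((Real.sin θ₁₃ : ℝ) : ℂ) * Complex.exp (Complex.I * δ), 0,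
                      ((Real.cos θ₁₃ : ℝ) : ℂ)]] *
        Matrix.of ![![((Real.cos θ₁₂ : ℝ) : ℂ), ((Real.sin θ₁₂ : ℝ) : ℂ), 0],
                    ![-((Real.sin θ₁₂ : ℝ) : ℂ), ((Real.cos θ₁₂ : ℝ) : ℂ), 0],
                    ![0, 0, (1 : ℂ)]] *
        diagonal ![(1 : ℂ), Complex.exp (Complex.I * β₂), Complex.exp (Complex.I * β₃)] := by
  set v : Matrix (Fin 3) (Fin 3) ℂ := ↑V with hv
  have hUU : v * star v = 1 := Matrix.mem_unitaryGroup_iff.mp V.2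
  have hUU' : star v * v = 1 := Matrix.mem_unitaryGroup_iff'.mp V.2
  have row_norm : ∀ i, Complex.normSq (v i 0) + Complex.normSq (v i 1) +
      Complex.normSq (v i 2) = 1 := by
    intro i
    have h := congrFun (congrFun hUU i) i
    simp [Matrix.mul_apply, Fin.sum_univ_three, Matrix.star_apply, Matrix.one_apply,
      Complex.star_def, Complex.mul_conj] at h
    exact_mod_cast h
  have col_norm : ∀ j, Complex.normSq (v 0 j) + Complex.normSq (v 1 j) +
      Complex.normSq (v 2 j) = 1 := by
    intro j
    have h := congrFun (congrFun hUU' j) j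
    simp [Matrix.mul_apply, Fin.sum_univ_three, Matrix.star_apply, Matrix.one_apply,
      Complex.star_def, Complex.mul_conj, mul_comm] at h
    exact_mod_cast h
  by_cases hdeg : ‖v 0 2‖ = 1
  · -- degenerate case : |v02| = 1
    have hn02 : Complex.normSq (v 0 2) = 1 := by
      rw [Complex.normSq_eq_norm_sq, hdeg]; norm_num
    obtain ⟨h00, h01⟩ : v 0 0 = 0 ∧ v 0 1 = 0 :=
      normSq_sum_zero (by have := row_norm 0; linarith)
    obtain ⟨h12, h22⟩ : v 1 2 = 0 ∧ v 2 2 = 0 :=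
      normSq_sum_zero (by have := col_norm 2; linarith)
    have col_orth : v 1 0 * (starRingEnd ℂ) (v 1 1) + v 2 0 * (starRingEnd ℂ) (v 2 1) = 0 := by
      have h := congrFun (congrFun hUU' 0) 1
      simp [Matrix.mul_apply, Fin.sum_univ_three, Matrix.star_apply, Matrix.one_apply,
        Complex.star_def] at h
      have h2 := congrArg (starRingEnd ℂ) h
      simp only [map_add, _root_.map_mul, Complex.conj_conj, map_zero] at h2
      rw [h00] at h2
      simpa [mul_comm] using h2
    obtain ⟨φ, a2, a3, b2, hq, hr, hs, ht⟩ :=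
      L1 (v 1 0) (v 1 1) (v 2 0) (v 2 1)
        (by have := row_norm 1; rw [h12] at this; simpa using this)
        (by have := col_norm 0; rw [h00] at this; simpa [add_comm] using this)
        (by have := col_norm 1; rw [h01] at this; simpa [add_comm] using this)
        col_orth
    refine ⟨0, Real.pi/2, φ - Real.pi/2, 0, Complex.arg (v 0 2), a2, a3, b2, 0, ?_⟩
    show v = Dl (Complex.arg (v 0 2)) a2 a3 * R23 (φ - Real.pi/2) * U13 (Real.pi/2) 0 *
      R12 0 * Dr b2 0
    rw [prodA]
    ext i j
    fin_cases i <;> fin_cases j <;>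
      simp [Real.cos_pi_div_two, Real.sin_pi_div_two, Real.sin_sub_pi_div_two,
        Real.cos_sub_pi_div_two, Real.sin_zero, Real.cos_zero, h00, h01, h12, h22,
        Matrix.vecHead, Matrix.vecTail]
    · -- (0,2) : v 0 2 = cexp (I arg) * ...
      conv_lhs => rw [← rep (v 0 2)]
      rw [hdeg]; push_cast; ring
    · rw [hq]; push_cast; ring
    · rw [hr]; push_cast; rw [mul_add, Complex.exp_add]; ring
    · rw [hs]; push_cast; ring
    · rw [ht]; push_cast; rw [mul_add, Complex.exp_add]; ring
  · -- main case : |v02| < 1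
    have hab02 : (0:ℝ) ≤ ‖v 0 2‖ := norm_nonneg _
    have habs02 : ‖v 0 2‖ ≤ 1 := by
      nlinarith [row_norm 0, Complex.normSq_eq_norm_sq (v 0 2), Complex.normSq_nonneg (v 0 0),
        Complex.normSq_nonneg (v 0 1)]
    have hlt : ‖v 0 2‖ < 1 := lt_of_le_of_ne habs02 hdeg
    set a := Real.arcsin (‖v 0 2‖) with ha_def
    have hsa : Real.sin a = ‖v 0 2‖ :=
      Real.sin_arcsin (by linarith) (le_of_lt hlt)
    have hca2 : Real.cos a ^ 2 = 1 - ‖v 0 2‖ ^ 2 := by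
      rw [ha_def, Real.cos_arcsin, Real.sq_sqrt] ; nlinarith
    have hca_pos : 0 < Real.cos a := by
      rw [ha_def, Real.cos_arcsin]
      exact Real.sqrt_pos.mpr (by nlinarith)
    have hrn0 := row_norm 0
    have hcn2 := col_norm 2
    have hns00 : Complex.normSq (v 0 0) = ‖v 0 0‖ ^ 2 := Complex.normSq_eq_norm_sq _
    have hns01 : Complex.normSq (v 0 1) = ‖v 0 1‖ ^ 2 := Complex.normSq_eq_norm_sq _
    have hns02 : Complex.normSq (v 0 2) = ‖v 0 2‖ ^ 2 := Complex.normSq_eq_norm_sq _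
    have hns12 : Complex.normSq (v 1 2) = ‖v 1 2‖ ^ 2 := Complex.normSq_eq_norm_sq _
    have hns22 : Complex.normSq (v 2 2) = ‖v 2 2‖ ^ 2 := Complex.normSq_eq_norm_sq _
    -- θ12
    have h01le : ‖v 0 1‖ / Real.cos a ≤ 1 := by
      rw [div_le_one hca_pos]
      nlinarith [norm_nonneg (v 0 1), Complex.normSq_nonneg (v 0 0)]
    have h01nn : 0 ≤ ‖v 0 1‖ / Real.cos a := by positivity
    set t := Real.arcsin (‖v 0 1‖ / Real.cos a) with ht_def
    have hst : Real.sin t = ‖v 0 1‖ / Real.cos a :=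
      Real.sin_arcsin (by linarith) h01le
    have hct : Real.cos t = ‖v 0 0‖ / Real.cos a := by
      rw [ht_def, Real.cos_arcsin]
      rw [show 1 - (‖v 0 1‖ / Real.cos a) ^ 2 =
          (‖v 0 0‖ / Real.cos a) ^ 2 by
        field_simp
        nlinarith]
      exact Real.sqrt_sq (by positivity)
    have hctca : Real.cos t * Real.cos a = ‖v 0 0‖ := by
      rw [hct]; field_simp
    have hstca : Real.sin t * Real.cos a = ‖v 0 1‖ := by
      rw [hst]; field_simp
    -- θ23
    have h12le : ‖v 1 2‖ / Real.cos a ≤ 1 := by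
      rw [div_le_one hca_pos]
      nlinarith [norm_nonneg (v 1 2), Complex.normSq_nonneg (v 2 2)]
    have h12nn : 0 ≤ ‖v 1 2‖ / Real.cos a := by positivity
    set b := Real.arcsin (‖v 1 2‖ / Real.cos a) with hb_def
    have hsb : Real.sin b = ‖v 1 2‖ / Real.cos a :=
      Real.sin_arcsin (by linarith) h12le
    have hcb : Real.cos b = ‖v 2 2‖ / Real.cos a := by
      rw [hb_def, Real.cos_arcsin]
      rw [show 1 - (‖v 1 2‖ / Real.cos a) ^ 2 =
          (‖v 2 2‖ / Real.cos a) ^ 2 by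
        field_simp
        nlinarith]
      exact Real.sqrt_sq (by positivity)
    have hsbca : Real.sin b * Real.cos a = ‖v 1 2‖ := by
      rw [hsb]; field_simp
    have hcbca : Real.cos b * Real.cos a = ‖v 2 2‖ := by
      rw [hcb]; field_simp
    -- phases
    set α₁ := Complex.arg (v 0 0) with hα₁_def
    set β₂ := Complex.arg (v 0 1) - α₁ with hβ₂_def
    set β₃ := Complex.arg (v 0 2) - α₁ with hβ₃_def
    set α₂ := Complex.arg (v 1 2) - β₃ with hα₂_def
    set α₃ := Complex.arg (v 2 2) - β₃ with hα₃_def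
    -- matched entries
    have e00 : v 0 0 = Complex.exp (Complex.I * α₁) *
        (((Real.cos t : ℝ) : ℂ) * ((Real.cos a : ℝ) : ℂ)) := by
      conv_lhs => rw [← rep (v 0 0)]
      rw [← hctca]; push_cast; ring
    have e01 : v 0 1 = Complex.exp (Complex.I * α₁) * Complex.exp (Complex.I * β₂) *
        (((Real.sin t : ℝ) : ℂ) * ((Real.cos a : ℝ) : ℂ)) := by
      conv_lhs => rw [← rep (v 0 1)]
      rw [← hstca, show Complex.I * ((Complex.arg (v 0 1) : ℝ) : ℂ) =
        Complex.I * (α₁:ℝ) + Complex.I * (β₂:ℝ) by rw [hβ₂_def]; push_cast; ring,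
        Complex.exp_add]
      push_cast; ring
    have e02 : v 0 2 = Complex.exp (Complex.I * α₁) * Complex.exp (Complex.I * β₃) *
        ((Real.sin a : ℝ) : ℂ) := by
      conv_lhs => rw [← rep (v 0 2)]
      rw [← hsa, show Complex.I * ((Complex.arg (v 0 2) : ℝ) : ℂ) =
        Complex.I * (α₁:ℝ) + Complex.I * (β₃:ℝ) by rw [hβ₃_def]; push_cast; ring,
        Complex.exp_add]
      push_cast; ring
    have e12 : v 1 2 = Complex.exp (Complex.I * α₂) * Complex.exp (Complex.I * β₃) *
        (((Real.sin b : ℝ) : ℂ) * ((Real.cos a : ℝ) : ℂ)) := by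
      conv_lhs => rw [← rep (v 1 2)]
      rw [← hsbca, show Complex.I * ((Complex.arg (v 1 2) : ℝ) : ℂ) =
        Complex.I * (α₂:ℝ) + Complex.I * (β₃:ℝ) by rw [hα₂_def]; push_cast; ring,
        Complex.exp_add]
      push_cast; ring
    have e22 : v 2 2 = Complex.exp (Complex.I * α₃) * Complex.exp (Complex.I * β₃) *
        (((Real.cos b : ℝ) : ℂ) * ((Real.cos a : ℝ) : ℂ)) := by
      conv_lhs => rw [← rep (v 2 2)]
      rw [← hcbca, show Complex.I * ((Complex.arg (v 2 2) : ℝ) : ℂ) =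
        Complex.I * (α₃:ℝ) + Complex.I * (β₃:ℝ) by rw [hα₃_def]; push_cast; ring,
        Complex.exp_add]
      push_cast; ring
    -- matrices
    set Mp := Dl α₁ α₂ α₃ * R23 b * U13 a 0 with hMp_def
    set W2 := R12 t * Dr β₂ β₃ with hW2_def
    have hMp_mem : Mp ∈ Matrix.unitaryGroup (Fin 3) ℂ :=
      mul_mem (mul_mem (Dl_mem α₁ α₂ α₃) (R23_mem b)) (U13_mem a 0)
    have hW2_mem : W2 ∈ Matrix.unitaryGroup (Fin 3) ℂ :=
      mul_mem (R12_mem t) (Dr_mem β₂ β₃)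
    have hW2U : W2 * star W2 = 1 := Matrix.mem_unitaryGroup_iff.mp hW2_mem
    have hW2U' : star W2 * W2 = 1 := Matrix.mem_unitaryGroup_iff'.mp hW2_mem
    have hMpU : Mp * star Mp = 1 := Matrix.mem_unitaryGroup_iff.mp hMp_mem
    have hMpU' : star Mp * Mp = 1 := Matrix.mem_unitaryGroup_iff'.mp hMp_mem
    have hX : Mp * W2 = Dl α₁ α₂ α₃ * R23 b * U13 a 0 * R12 t * Dr β₂ β₃ := by
      rw [hMp_def, hW2_def, ← Matrix.mul_assoc]
    have hVrow0 : ∀ jj : Fin 3, v 0 jj = (Mp * W2) 0 jj := by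
      intro jj
      rw [hX, prodA]
      fin_cases jj
      · simpa using e00
      · simpa using e01
      · simpa using e02
    have hVcol2 : ∀ k : Fin 3, v k 2 = (Mp * W2) k 2 := by
      intro k
      rw [hX, prodA]
      fin_cases k
      · simpa using e02
      · simpa using e12
      · simpa using e22
    have hMpX := Mp_eq a b α₁ α₂ α₃
    have hW2X := W2_eq t β₂ β₃
    have hMW : (Mp * W2) * star W2 = Mp := by rw [Matrix.mul_assoc, hW2U, Matrix.mul_one]
    have hYrow0 : ∀ jj : Fin 3, (v * star W2) 0 jj = Mp 0 jj := by
      intro jj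
      calc (v * star W2) 0 jj = ∑ l, v 0 l * star W2 l jj := Matrix.mul_apply
        _ = ∑ l, (Mp * W2) 0 l * star W2 l jj :=
            Finset.sum_congr rfl fun l _ => by rw [hVrow0 l]
        _ = ((Mp * W2) * star W2) 0 jj := (Matrix.mul_apply).symm
        _ = Mp 0 jj := by rw [hMW]
    have hMpW2col2 : ∀ k : Fin 3, (Mp * W2) k 2 = Mp k 2 * Complex.exp (Complex.I * β₃) := by
      intro k
      rw [show (Mp * W2) k 2 = Mp k 0 * W2 0 2 + Mp k 1 * W2 1 2 + Mp k 2 * W2 2 2 by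
        simp [Matrix.mul_apply, Fin.sum_univ_three], hW2_def, hW2X]
      simp
    have hYcol2 : ∀ k : Fin 3, (v * star W2) k 2 = Mp k 2 := by
      intro k
      have h1 : (v * star W2) k 2 = v k 2 * Complex.exp (-(Complex.I * β₃)) := by
        rw [show (v * star W2) k 2 =
          v k 0 * (starRingEnd ℂ) (W2 2 0) + v k 1 * (starRingEnd ℂ) (W2 2 1) +
            v k 2 * (starRingEnd ℂ) (W2 2 2) by
          simp [Matrix.mul_apply, Fin.sum_univ_three, Matrix.star_apply, Complex.star_def],
          hW2_def, hW2X]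
        simp [conj_exp_I]
      rw [h1, hVcol2 k, hMpW2col2 k, mul_assoc, exp_mul_exp_neg, mul_one]
    set G := star Mp * (v * star W2) with hG_def
    have hGmem : G ∈ Matrix.unitaryGroup (Fin 3) ℂ :=
      mul_mem (Unitary.star_mem hMp_mem) (mul_mem V.2 (Unitary.star_mem hW2_mem))
    have hMpG : Mp * G = v * star W2 := by
      rw [hG_def, ← Matrix.mul_assoc, hMpU, Matrix.one_mul]
    have hGcol2 : ∀ i : Fin 3, G i 2 = (1 : Matrix (Fin 3) (Fin 3) ℂ) i 2 := by
      intro i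
      calc G i 2 = ∑ k, star Mp i k * (v * star W2) k 2 := Matrix.mul_apply
        _ = ∑ k, star Mp i k * Mp k 2 :=
            Finset.sum_congr rfl fun k _ => by rw [hYcol2 k]
        _ = (star Mp * Mp) i 2 := (Matrix.mul_apply).symm
        _ = (1 : Matrix (Fin 3) (Fin 3) ℂ) i 2 := by rw [hMpU']
    have hG02 : G 0 2 = 0 := by simpa [Matrix.one_apply] using hGcol2 0
    have hG12 : G 1 2 = 0 := by simpa [Matrix.one_apply] using hGcol2 1
    have hG22 : G 2 2 = 1 := by simpa [Matrix.one_apply] using hGcol2 2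
    have hGU : G * star G = 1 := Matrix.mem_unitaryGroup_iff.mp hGmem
    have hGU' : star G * G = 1 := Matrix.mem_unitaryGroup_iff'.mp hGmem
    obtain ⟨hG20, hG21⟩ : G 2 0 = 0 ∧ G 2 1 = 0 := by
      apply normSq_sum_zero
      have h := congrFun (congrFun hGU 2) 2
      simp [Matrix.mul_apply, Fin.sum_univ_three, Matrix.star_apply, Complex.star_def,
        Complex.mul_conj, hG22] at h
      exact_mod_cast h
    have hrow0j : ∀ jj : Fin 3, Mp 0 0 * G 0 jj + Mp 0 1 * G 1 jj + Mp 0 2 * G 2 jj = Mp 0 jj := by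
      intro jj
      have h := congrFun (congrFun hMpG 0) jj
      rw [hYrow0 jj] at h
      rw [show (Mp * G) 0 jj = Mp 0 0 * G 0 jj + Mp 0 1 * G 1 jj + Mp 0 2 * G 2 jj by
        simp [Matrix.mul_apply, Fin.sum_univ_three]] at h
      exact h
    have hAne : Complex.exp (Complex.I * α₁) * ((Real.cos a : ℝ) : ℂ) ≠ 0 :=
      mul_ne_zero (exp_I_ne α₁) (by exact_mod_cast ne_of_gt hca_pos)
    have hMp00 : Mp 0 0 = Complex.exp (Complex.I * α₁) * ((Real.cos a : ℝ) : ℂ) := by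
      rw [hMp_def, hMpX]; simp
    have hMp01 : Mp 0 1 = 0 := by rw [hMp_def, hMpX]; simp
    have hMp02 : Mp 0 2 = Complex.exp (Complex.I * α₁) * ((Real.sin a : ℝ) : ℂ) := by
      rw [hMp_def, hMpX]; simp
    have hG00 : G 0 0 = 1 := by
      have h := hrow0j 0
      rw [hMp00, hMp01, hMp02, hG20] at h
      simp only [zero_mul, mul_zero, add_zero] at h
      exact mul_left_cancel₀ hAne (h.trans (mul_one _).symm)
    have hG01 : G 0 1 = 0 := by
      have h := hrow0j 1
      rw [hMp00, hMp01, hMp02, hG21] at h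
      simp only [zero_mul, mul_zero, add_zero] at h
      exact (mul_eq_zero.mp h).resolve_left hAne
    have hG10 : G 1 0 = 0 := by
      have h := congrFun (congrFun hGU' 0) 0
      simp only [Matrix.mul_apply, Fin.sum_univ_three, Matrix.star_apply, Complex.star_def,
        Matrix.one_apply_eq, hG00, hG20, _root_.map_one, _root_.map_zero, one_mul, zero_mul,
        add_zero] at h
      rw [← Complex.normSq_eq_zero]
      have h2 : (1:ℝ) + Complex.normSq (G 1 0) = 1 := by
        rw [show ((starRingEnd ℂ) (G 1 0) * G 1 0) = ((Complex.normSq (G 1 0) : ℝ) : ℂ) by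
          rw [mul_comm, Complex.mul_conj]] at h
        exact_mod_cast h
      linarith
    have habsG11 : ‖G 1 1‖ = 1 := by
      apply abs_one_of_normSq_one
      have h := congrFun (congrFun hGU' 1) 1
      simp only [Matrix.mul_apply, Fin.sum_univ_three, Matrix.star_apply, Complex.star_def,
        Matrix.one_apply_eq, hG01, hG21, _root_.map_zero, zero_mul, zero_add, add_zero] at h
      rw [show ((starRingEnd ℂ) (G 1 1) * G 1 1) = ((Complex.normSq (G 1 1) : ℝ) : ℂ) by
        rw [mul_comm, Complex.mul_conj]] at h
      exact_mod_cast h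
    set γ := Complex.arg (G 1 1) with hγ_def
    have hG11 : G 1 1 = Complex.exp (Complex.I * γ) := by
      conv_lhs => rw [← rep (G 1 1)]
      rw [habsG11]; norm_num; rfl
    have hGdiag : G = diagonal ![(1:ℂ), Complex.exp (Complex.I * γ), 1] := by
      ext i j
      fin_cases i <;> fin_cases j <;>
        simp [Matrix.diagonal, hG00, hG01, hG02, hG10, hG11, hG12, hG20, hG21, hG22]
    have hVeq : v = Mp * G * W2 := by
      rw [hMpG, Matrix.mul_assoc, hW2U', Matrix.mul_one]
    refine ⟨t, a, b, -γ, α₁, α₂ + γ, α₃ + γ, β₂, β₃ - γ, ?_⟩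
    show v = Dl α₁ (α₂+γ) (α₃+γ) * R23 b * U13 a (-γ) * R12 t * Dr β₂ (β₃-γ)
    rw [← prodB a b t γ α₁ α₂ α₃ β₂ β₃, hVeq, hGdiag, hMp_def, hW2_def]
    simp only [Matrix.mul_assoc]

end
end
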